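/- Let k ≥ 1 and L_m = {c} ∪ {x₁⋯x_{(k+1)m} | x_i ∈ {a,bb}, and the number of a-blocks is a multiple of k+1} over {a,b,c}. In any k-limited propagating tabled 0L system generating L_m in which some table contains the rule a→bb, there is a derivable word not in L_m; hence every table's rules for a must be a→a only, and consequently all words of L_m \ {c} must be derived directly from the axiom c, requiring more than m rules. -/

import Mathlib

/-- One k-limited derivation step: for each letter x, exactly min(k, |v|_x) occurrences
of x in v are rewritten, each by some rule of R with left side x; the remaining
occurrences stay unchanged. -/
def klStep {V : Type*} [DecidableEq V] (k : ℕ) (R : Set (V × List V)) (v w : List V) : Prop :=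
  ∃ (S : Finset (Fin v.length)) (f : Fin v.length → List V),
    (∀ x : V, (S.filter (fun i => v.get i = x)).card = min k (v.count x)) ∧
    (∀ i ∈ S, (v.get i, f i) ∈ R) ∧
    (∀ i, i ∉ S → f i = [v.get i]) ∧
    w = (List.ofFn f).flatten

/-- Deterministic k-limited step with rule function P. -/
def detStep {V : Type*} [DecidableEq V] (k : ℕ) (P : V → List V) : List V → List V → Prop :=
  klStep k {p | p.2 = P p.1}

/-- The language generated from axiom ω by a step relation. -/
def lang {V : Type*} (step : List V → List V → Prop) (ω : List V) : Set (List V) :=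
  {w | Relation.ReflTransGen step ω w}

inductive V3 : Type
  | a | b | c
deriving DecidableEq

instance : Fintype V3 :=
  ⟨{V3.a, V3.b, V3.c}, fun x => by cases x <;> simp⟩

open V3

/-- L_m = {c} ∪ {x₁⋯x_{(k+1)m} | xᵢ ∈ {a,bb}, number of a-blocks a multiple of k+1}. -/
def Lm (k m : ℕ) : Set (List V3) :=
  {[c]} ∪ {z | ∃ bs : List (List V3),
    bs.length = (k + 1) * m ∧ (∀ x ∈ bs, x = [a] ∨ x = [b, b]) ∧
    (∃ j ≤ m, bs.count [a] = (k + 1) * j) ∧ z = bs.flatten}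


/-!
Starting from `a^((k+1)m) ∈ L_m`, a table with `a → bb` can rewrite exactly `k` of the `a`'s,
leaving `(k+1)m - k` letters `a`, which is not a multiple of `k + 1`; so no table contains
`a → bb`. Then every table fixes every `c`-free word, so each word of `L_m \ {c}` is produced in
one step from the axiom `c`, i.e. by a rule `c → w`. The words `a^((k+1)j) (bb)^((k+1)(m-j))`,
`j ≤ m`, are `m + 1` distinct such words.
-/

lemma Relation.ReflTransGen.of_ne_of_forall_eq {α : Type*} {r : α → α → Prop} {a b : α}
    (h : Relation.ReflTransGen r a b) (hb : b ≠ a)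
    (hfix : ∀ x y, Relation.ReflTransGen r a x → x ≠ a → r x y → y = x) : r a b := by
  induction h with
  | refl => exact absurd rfl hb
  | @tail x y hx hxy ih =>
    by_cases hxa : x = a
    · exact hxa ▸ hxy
    · rw [hfix x y hx hxa hxy] at hb ⊢
      exact ih hb

lemma Finset.card_le_sum_card_of_forall_exists_mem {α : Type*} [DecidableEq α]
    {s : Finset α} {F : Finset (Finset α)} (h : ∀ x ∈ s, ∃ T ∈ F, x ∈ T) :
    s.card ≤ ∑ T ∈ F, T.card :=
  calc s.card ≤ (F.biUnion id).card :=
        Finset.card_le_card fun x hx => Finset.mem_biUnion.mpr (h x hx)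
    _ ≤ ∑ T ∈ F, T.card := Finset.card_biUnion_le

section klStep

variable {V : Type*} [DecidableEq V] {k : ℕ} {R : Set (V × List V)}

lemma klStep_singleton (hk : 1 ≤ k) {x : V} {z : List V} (h : klStep k R [x] z) :
    (x, z) ∈ R := by
  obtain ⟨S, f, hcard, hS, -, rfl⟩ := h
  have hS_univ : S = Finset.univ := by
    apply Finset.eq_univ_of_card
    simpa [Nat.min_eq_right hk] using hcard x
  simpa using hS 0 (hS_univ ▸ Finset.mem_univ _)

lemma klStep_eq_self {v w : List V} (hR : ∀ x ∈ v, ∀ u, (x, u) ∈ R → u = [x])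
    (h : klStep k R v w) : w = v := by
  obtain ⟨S, f, -, hS, hnS, rfl⟩ := h
  have hf : f = fun i => [v.get i] := by
    funext i
    by_cases hi : i ∈ S
    · exact hR _ (v.get_mem i) _ (hS i hi)
    · exact hnS i hi
  rw [hf, show (fun i => [v.get i]) = (fun x => [x]) ∘ v.get from rfl, ← List.map_ofFn,
    List.ofFn_get, ← List.flatMap_def, List.flatMap_singleton']

lemma klStep_replicate {x : V} {u : List V} {N : ℕ} (hkN : k ≤ N) (hu : (x, u) ∈ R) :
    klStep k R (List.replicate N x) ((List.replicate k u).flatten ++ List.replicate (N - k) x) := by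
  refine ⟨Finset.univ.filter fun i => (i : ℕ) < k, fun i => if (i : ℕ) < k then u else [x],
    fun y => ?_, fun i hi => ?_, fun i hi => ?_, ?_⟩
  · by_cases hy : x = y
    · subst hy
      simp [Fin.card_filter_val_lt, hkN]
    · simp [hy, List.count_replicate]
  · simp_all
  · simp_all
  · have : List.ofFn (fun i : Fin (List.replicate N x).length => if (i : ℕ) < k then u else [x])
        = List.replicate k u ++ List.replicate (N - k) [x] := by
      apply List.ext_getElem
      · simp; omega
      · intro n h1 h2
        simp [List.getElem_append, List.getElem_replicate]
    rw [this, List.flatten_append, List.flatten_replicate_singleton]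

end klStep

section Lm

variable {k m : ℕ}

lemma count_a_flatten_of_blocks {bs : List (List V3)}
    (h : ∀ x ∈ bs, x = [a] ∨ x = [b, b]) :
    bs.flatten.count a = bs.count [a] := by
  induction bs with
  | nil => rfl
  | cons x bs ih =>
    rcases h x List.mem_cons_self with rfl | rfl <;>
      simp [ih fun y hy => h y (List.mem_cons_of_mem _ hy)]

lemma c_not_mem_flatten_of_blocks {bs : List (List V3)}
    (h : ∀ x ∈ bs, x = [a] ∨ x = [b, b]) :
    c ∉ bs.flatten := by
  simp only [List.mem_flatten, not_exists, not_and]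
  intro x hx
  rcases h x hx with rfl | rfl <;> simp

lemma c_not_mem_of_mem_Lm {z : List V3} (hz : z ∈ Lm k m) (hzc : z ≠ [c]) : c ∉ z := by
  obtain hz | ⟨bs, -, hbs, -, rfl⟩ := hz
  · exact absurd hz hzc
  · exact c_not_mem_flatten_of_blocks hbs

lemma dvd_count_a_of_mem_Lm {z : List V3} (hz : z ∈ Lm k m) (hzc : z ≠ [c]) :
    k + 1 ∣ z.count a := by
  obtain hz | ⟨bs, -, hbs, ⟨j, -, hj⟩, rfl⟩ := hz
  · exact absurd hz hzc
  · exact ⟨j, (count_a_flatten_of_blocks hbs).trans hj⟩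

lemma replicate_a_mem_Lm (k m : ℕ) : List.replicate ((k + 1) * m) a ∈ Lm k m :=
  Or.inr ⟨List.replicate ((k + 1) * m) [a], by simp,
    fun _ hx => Or.inl (List.eq_of_mem_replicate hx), ⟨m, le_rfl, by simp⟩, by simp⟩

lemma exists_klStep_not_mem_Lm (hk : 1 ≤ k) (hm : 1 ≤ m) {R : Set (V3 × List V3)}
    (hR : (a, [b, b]) ∈ R) :
    ∃ w, klStep k R (List.replicate ((k + 1) * m) a) w ∧ w ∉ Lm k m := by
  obtain ⟨n, rfl⟩ := Nat.exists_eq_add_of_le' hm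
  have hkN : k ≤ (k + 1) * (n + 1) := by rw [Nat.mul_succ]; omega
  set w := (List.replicate k [b, b]).flatten ++ List.replicate ((k + 1) * (n + 1) - k) a
  refine ⟨w, klStep_replicate hkN hR, fun hw => ?_⟩
  have hcount : w.count a = (k + 1) * n + 1 := by
    simp [w, List.count_flatten, Nat.mul_succ]
    omega
  have hne : w ≠ [c] := fun h => by simp [h] at hcount
  have hdvd := dvd_count_a_of_mem_Lm hw hne
  rw [hcount] at hdvd
  have := Nat.le_of_dvd one_pos ((Nat.dvd_add_right (dvd_mul_right _ _)).mp hdvd)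
  omega

def blockList (k m j : ℕ) : List (List V3) :=
  List.replicate ((k + 1) * j) [a] ++ List.replicate ((k + 1) * (m - j)) [b, b]

lemma mem_blockList {k m j : ℕ} {x : List V3} (hx : x ∈ blockList k m j) :
    x = [a] ∨ x = [b, b] := by
  rcases List.mem_append.mp hx with hx | hx
  · exact Or.inl (List.eq_of_mem_replicate hx)
  · exact Or.inr (List.eq_of_mem_replicate hx)

lemma count_a_blockList_flatten (k m j : ℕ) :
    (blockList k m j).flatten.count a = (k + 1) * j := by
  rw [count_a_flatten_of_blocks fun _ => mem_blockList]
  simp [blockList, List.count_replicate]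

lemma blockList_flatten_mem_Lm {j : ℕ} (hj : j ≤ m) : (blockList k m j).flatten ∈ Lm k m := by
  refine Or.inr ⟨_, ?_, fun _ => mem_blockList, ⟨j, hj, ?_⟩, rfl⟩
  · rw [blockList, List.length_append, List.length_replicate, List.length_replicate,
      ← Nat.mul_add, Nat.add_sub_cancel' hj]
  · simp [blockList, List.count_replicate]

lemma blockList_flatten_ne_c (k m j : ℕ) : (blockList k m j).flatten ≠ [c] := fun h =>
  c_not_mem_flatten_of_blocks (fun _ => mem_blockList) (h ▸ List.mem_singleton_self c)

lemma lt_sum_card_of_forall_mem_Lm {Tbls : Finset (Finset (V3 × List V3))}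
    (h : ∀ z ∈ Lm k m, z ≠ [c] → ∃ T ∈ Tbls, (c, z) ∈ T) : m < ∑ T ∈ Tbls, T.card := by
  have hinj : Set.InjOn (fun j => (c, (blockList k m j).flatten)) (Finset.range (m + 1)) := by
    intro i _ j _ hij
    have := congrArg (List.count a ∘ Prod.snd) hij
    simp only [Function.comp_apply, count_a_blockList_flatten] at this
    exact Nat.eq_of_mul_eq_mul_left k.succ_pos this
  calc m < ((Finset.range (m + 1)).image fun j => (c, (blockList k m j).flatten)).card := by
        rw [Finset.card_image_of_injOn hinj, Finset.card_range]; omega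
    _ ≤ ∑ T ∈ Tbls, T.card := by
        refine Finset.card_le_sum_card_of_forall_exists_mem fun p hp => ?_
        obtain ⟨j, hj, rfl⟩ := Finset.mem_image.mp hp
        exact h _ (blockList_flatten_mem_Lm (Nat.lt_succ_iff.mp (Finset.mem_range.mp hj)))
          (blockList_flatten_ne_c k m j)

lemma eq_singleton_of_rule_of_a_bb_not_mem {T : Finset (V3 × List V3)}
    (hT : ∀ p ∈ T, (p.1 = b → p.2 = [b]) ∧ (p.1 = a → p.2 = [a] ∨ p.2 = [b, b]))
    (hab : (a, [b, b]) ∉ T) {x : V3} (hx : x ≠ c) {u : List V3} (hu : (x, u) ∈ T) :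
    u = [x] := by
  cases x with
  | a => exact ((hT _ hu).2 rfl).resolve_right fun h => hab (h ▸ hu)
  | b => exact (hT _ hu).1 rfl
  | c => exact absurd rfl hx

end Lm

theorem stmt14_general (k m : ℕ) (hk : 1 ≤ k) (hm : 1 ≤ m)
    (Tbls : Finset (Finset (V3 × List V3)))
    (htab : ∀ T ∈ Tbls, ∀ p ∈ T,
      (p.1 = b → p.2 = [b]) ∧ (p.1 = a → p.2 = [a] ∨ p.2 = [b, b]))
    (hgen : lang (fun u v => ∃ T ∈ Tbls, klStep k (↑T : Set (V3 × List V3)) u v) [c]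
      = Lm k m) :
    (∀ T ∈ Tbls, (a, [b, b]) ∉ T) ∧
    (∀ z ∈ Lm k m, z ≠ [c] → ∃ T ∈ Tbls, klStep k (↑T : Set (V3 × List V3)) [c] z) ∧
    m < ∑ T ∈ Tbls, T.card := by
  have no_rule_a_bb : ∀ T ∈ Tbls, (a, [b, b]) ∉ T := by
    intro T hT hab
    obtain ⟨w, hstep, hw⟩ := exists_klStep_not_mem_Lm hk hm (R := ↑T) hab
    have hstart := hgen.symm.subset (replicate_a_mem_Lm k m)
    exact hw (hgen.subset (Relation.ReflTransGen.tail hstart ⟨T, hT, hstep⟩))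
  have from_axiom :
      ∀ z ∈ Lm k m, z ≠ [c] → ∃ T ∈ Tbls, klStep k (↑T : Set (V3 × List V3)) [c] z := by
    intro z hz hzc
    refine (hgen.symm.subset hz : Relation.ReflTransGen _ _ _).of_ne_of_forall_eq hzc ?_
    rintro x y hx hxc ⟨T, hT, hxy⟩
    have hcx := c_not_mem_of_mem_Lm (hgen.subset hx) hxc
    refine klStep_eq_self (fun v hv u hu => ?_) hxy
    exact eq_singleton_of_rule_of_a_bb_not_mem (htab T hT) (no_rule_a_bb T hT)
      (ne_of_mem_of_not_mem hv hcx) hu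
  refine ⟨no_rule_a_bb, from_axiom, lt_sum_card_of_forall_mem_Lm (k := k) fun z hz hzc => ?_⟩
  obtain ⟨T, hT, hstep⟩ := from_axiom z hz hzc
  exact ⟨T, hT, klStep_singleton hk hstep⟩

/-- In any kℓPT0L system generating L_m whose tables rewrite b only to b and a only to
a or bb, no table may contain the rule a→bb (it would derive a word outside L_m);
consequently all words of L_m \ {c} are derived directly from the axiom c, and the
system has more than m rules. -/
theorem stmt14 (k m : ℕ) (hk : 1 ≤ k) (hm : 1 ≤ m)
    (Tbls : Finset (Finset (V3 × List V3)))
    (hcomplete : ∀ T ∈ Tbls, ∀ x : V3, ∃ w, (x, w) ∈ T)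
    (htab : ∀ T ∈ Tbls, ∀ p ∈ T,
      (p.1 = b → p.2 = [b]) ∧ (p.1 = a → p.2 = [a] ∨ p.2 = [b, b]))
    (hgen : lang (fun u v => ∃ T ∈ Tbls, klStep k (↑T : Set (V3 × List V3)) u v) [c]
      = Lm k m) :
    (∀ T ∈ Tbls, (a, [b, b]) ∉ T) ∧
    (∀ z ∈ Lm k m, z ≠ [c] → ∃ T ∈ Tbls, klStep k (↑T : Set (V3 × List V3)) [c] z) ∧
    m < ∑ T ∈ Tbls, T.card :=
  stmt14_general k m hk hm Tbls htab hgen
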